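/- For the Invincible Fighter (u = 1), for every fixed t ≥ 0 the sequence n ↦ N(n,t) (with N(0,t) = 0) is concave in n, and consequently the sequence n ↦ N*(n,t) is concave in n. -/

import Mathlib

/-!
For `u = 1` and fixed `t`, `n ↦ N(n + 1, t)` is the sup-convolution of `i ↦ a (i + 1)` with
`N*(·, t)`. A sup-convolution of concave sequences is concave by an exchange argument, and
`N*` inherits concavity from `N` because `f ↦ e^{-t} ∫_0^t f(x) e^x dx` is linear and monotone.
Concavity of `N*` at indices below `m` is all the exchange argument needs to give concavity of
`N` at `m`, so a strong induction on `m` closes; the first step `N(2) ≤ 2 a(1)` is checked by hand.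
-/

open Real MeasureTheory Filter Topology

/-- Auxiliary history-based recursion: `Nhist a u n m t` equals `N(m,t)` when `m ≤ n`. -/
noncomputable def Nhist (a : ℕ → ℝ) (u : ℝ) : ℕ → ℕ → ℝ → ℝ
  | 0, _, _ => 0
  | n + 1, m, t =>
      if m ≤ n then Nhist a u n m t
      else (Finset.Icc 1 (n + 1)).sup'
          (Finset.nonempty_Icc.mpr (Nat.succ_le_succ (Nat.zero_le n)))
          (fun j => a j + (a j * (1 - u) + u) *
            (Real.exp (-t) * ∫ x in (0:ℝ)..t, Nhist a u n (n + 1 - j) x * Real.exp x))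

/-- `Nval a u n t` is `N(n,t)`, the optimal expected number of enemy planes shot down,
with `N(0,t) = 0` and `N(n,t) = max_{1 ≤ j ≤ n} N_n(j,t)`. -/
noncomputable def Nval (a : ℕ → ℝ) (u : ℝ) (n : ℕ) (t : ℝ) : ℝ :=
  Nhist a u n n t

/-- `Nstar a u r t` is `N*(r,t) = e^{-t} ∫_0^t N(r,x) e^x dx` (so `N*(0,t) = 0`). -/
noncomputable def Nstar (a : ℕ → ℝ) (u : ℝ) (r : ℕ) (t : ℝ) : ℝ :=
  Real.exp (-t) * ∫ x in (0:ℝ)..t, Nval a u r x * Real.exp x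

/-- `Nalloc a u n j t` is `N_n(j,t) = a(j) + c(j)·N*(n-j,t)` where `c(j) = a(j)(1-u)+u`. -/
noncomputable def Nalloc (a : ℕ → ℝ) (u : ℝ) (n j : ℕ) (t : ℝ) : ℝ :=
  a j + (a j * (1 - u) + u) * Nstar a u (n - j) t

/-- `Kopt a u n t = min { j ∈ {1,…,n} : N_n(j,t) = N(n,t) }`. -/
noncomputable def Kopt (a : ℕ → ℝ) (u : ℝ) (n : ℕ) (t : ℝ) : ℕ :=
  sInf {j : ℕ | 1 ≤ j ∧ j ≤ n ∧ Nalloc a u n j t = Nval a u n t}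

section Recursion

variable (a : ℕ → ℝ) (u : ℝ)

lemma Nhist_eq_Nval (n m : ℕ) (t : ℝ) (hm : m ≤ n) : Nhist a u n m t = Nval a u m t := by
  induction n with
  | zero => obtain rfl := Nat.le_zero.mp hm; rfl
  | succ n ih =>
    rcases hm.lt_or_eq with hm | rfl
    · rw [Nhist, if_pos (Nat.lt_succ_iff.mp hm), ih (Nat.lt_succ_iff.mp hm)]
    · rfl

lemma Nval_zero (t : ℝ) : Nval a u 0 t = 0 := rfl

lemma Nstar_zero (t : ℝ) : Nstar a u 0 t = 0 := by
  simp [Nstar, Nval_zero]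

lemma Nval_succ (n : ℕ) (t : ℝ) :
    Nval a u (n + 1) t = (Finset.Icc 1 (n + 1)).sup'
      (Finset.nonempty_Icc.mpr (Nat.succ_le_succ (Nat.zero_le n)))
      (fun j => Nalloc a u (n + 1) j t) := by
  rw [Nval, Nhist, if_neg (Nat.not_succ_le_self n)]
  refine Finset.sup'_congr _ rfl fun j hj => ?_
  have hj : n + 1 - j ≤ n := by simp only [Finset.mem_Icc] at hj; omega
  simp only [Nhist_eq_Nval a u n _ _ hj]
  rfl

lemma Nalloc_le_Nval {n j : ℕ} (t : ℝ) (hj₁ : 1 ≤ j) (hjn : j ≤ n) :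
    Nalloc a u n j t ≤ Nval a u n t := by
  obtain ⟨n, rfl⟩ := Nat.exists_eq_add_of_le' (hj₁.trans hjn)
  rw [Nval_succ]
  exact Finset.le_sup' (fun j => Nalloc a u (n + 1) j t) (Finset.mem_Icc.mpr ⟨hj₁, hjn⟩)

lemma exists_Nalloc_eq_Nval (n : ℕ) (t : ℝ) :
    ∃ j, 1 ≤ j ∧ j ≤ n + 1 ∧ Nval a u (n + 1) t = Nalloc a u (n + 1) j t := by
  obtain ⟨j, hj, hmax⟩ := Finset.exists_mem_eq_sup'
    (Finset.nonempty_Icc.mpr (Nat.succ_le_succ (Nat.zero_le n))) (fun j => Nalloc a u (n + 1) j t)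
  exact ⟨j, (Finset.mem_Icc.mp hj).1, (Finset.mem_Icc.mp hj).2, by rw [Nval_succ, hmax]⟩

lemma Nval_continuous (n : ℕ) : Continuous (Nval a u n) := by
  induction n using Nat.strong_induction_on with
  | _ n ih =>
    rcases n with _ | n
    · exact continuous_const
    rw [funext (Nval_succ a u n)]
    refine Continuous.finset_sup'_apply _ fun j hj => ?_
    have hint : Continuous fun x => Nval a u (n + 1 - j) x * exp x :=
      (ih _ (by simp only [Finset.mem_Icc] at hj; omega)).mul continuous_exp
    exact continuous_const.add <| continuous_const.mul <|
      (continuous_exp.comp continuous_neg).mul <|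
        intervalIntegral.continuous_primitive (fun _ _ => hint.intervalIntegrable _ _) 0

lemma Nval_one (t : ℝ) : Nval a u 1 t = a 1 := by
  obtain ⟨j, hj₁, hj₂, h⟩ := exists_Nalloc_eq_Nval a u 0 t
  obtain rfl : j = 1 := by omega
  simp [h, Nalloc, Nstar_zero]

lemma Nstar_one (t : ℝ) : Nstar a u 1 t = a 1 * (1 - exp (-t)) := by
  simp only [Nstar, Nval_one, intervalIntegral.integral_const_mul, integral_exp, exp_zero]
  rw [exp_neg]
  field_simp

lemma Nstar_sub_Nstar (m n : ℕ) (t : ℝ) :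
    Nstar a u m t - Nstar a u n t =
      exp (-t) * ∫ x in (0:ℝ)..t, (Nval a u m x - Nval a u n x) * exp x := by
  have hint (k : ℕ) : IntervalIntegrable (fun x => Nval a u k x * exp x) volume 0 t :=
    ((Nval_continuous a u k).mul continuous_exp).intervalIntegrable _ _
  simp only [Nstar, sub_mul, intervalIntegral.integral_sub (hint m) (hint n), mul_sub]

end Recursion

lemma exp_neg_mul_integral_mul_exp_mono {f g : ℝ → ℝ} {t : ℝ} (ht : 0 ≤ t)
    (hf : Continuous f) (hg : Continuous g) (hfg : ∀ x ∈ Set.Icc 0 t, f x ≤ g x) :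
    exp (-t) * ∫ x in (0:ℝ)..t, f x * exp x ≤ exp (-t) * ∫ x in (0:ℝ)..t, g x * exp x := by
  refine mul_le_mul_of_nonneg_left ?_ (exp_pos _).le
  exact intervalIntegral.integral_mono_on ht ((hf.mul continuous_exp).intervalIntegrable _ _)
    ((hg.mul continuous_exp).intervalIntegrable _ _)
    fun x hx => mul_le_mul_of_nonneg_right (hfg x hx) (exp_pos x).le

lemma Nstar_concave_at {a : ℕ → ℝ} {u t : ℝ} {k : ℕ} (ht : 0 ≤ t)
    (hN : ∀ x ∈ Set.Icc 0 t, Nval a u (k + 2) x - Nval a u (k + 1) x ≤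
      Nval a u (k + 1) x - Nval a u k x) :
    Nstar a u (k + 2) t - Nstar a u (k + 1) t ≤ Nstar a u (k + 1) t - Nstar a u k t := by
  rw [Nstar_sub_Nstar, Nstar_sub_Nstar]
  exact exp_neg_mul_integral_mul_exp_mono ht
    ((Nval_continuous a u _).sub (Nval_continuous a u _))
    ((Nval_continuous a u _).sub (Nval_continuous a u _)) hN

/-- The exchange argument: an optimal split of `m + 2` and one of `m` can be traded for two
(possibly suboptimal) splits of `m + 1`, moving one unit in whichever summand gains from it. -/
theorem supConvolution_concave_at {f g h : ℕ → ℝ} {m : ℕ}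
    (hf : AntitoneOn (fun k => f (k + 1) - f k) (Set.Iic (m + 1)))
    (hg : AntitoneOn (fun k => g (k + 1) - g k) (Set.Iic (m + 1)))
    (hle : ∀ i j, f i + g j ≤ h (i + j))
    (hmax : ∀ r, ∃ i j, i + j = r ∧ h r = f i + g j) :
    h (m + 2) - h (m + 1) ≤ h (m + 1) - h m := by
  obtain ⟨i₂, j₂, hr₂, e₂⟩ := hmax (m + 2)
  obtain ⟨i₀, j₀, hr₀, e₀⟩ := hmax m
  rcases lt_or_ge i₀ i₂ with hi | hi
  · obtain ⟨i, rfl⟩ : ∃ i, i₂ = i + 1 := ⟨i₂ - 1, by omega⟩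
    have hfi : f (i + 1) - f i ≤ f (i₀ + 1) - f i₀ :=
      hf (Set.mem_Iic.mpr (by omega)) (Set.mem_Iic.mpr (by omega)) (by omega)
    have h₁ : f i + g j₂ ≤ h (m + 1) := by simpa [show i + j₂ = m + 1 by omega] using hle i j₂
    have h₂ : f (i₀ + 1) + g j₀ ≤ h (m + 1) := by
      simpa [show i₀ + 1 + j₀ = m + 1 by omega] using hle (i₀ + 1) j₀
    linarith
  · obtain ⟨j, rfl⟩ : ∃ j, j₂ = j + 1 := ⟨j₂ - 1, by omega⟩
    have hgj : g (j + 1) - g j ≤ g (j₀ + 1) - g j₀ :=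
      hg (Set.mem_Iic.mpr (by omega)) (Set.mem_Iic.mpr (by omega)) (by omega)
    have h₁ : f i₂ + g j ≤ h (m + 1) := by simpa [show i₂ + j = m + 1 by omega] using hle i₂ j
    have h₂ : f i₀ + g (j₀ + 1) ≤ h (m + 1) := by
      simpa [show i₀ + (j₀ + 1) = m + 1 by omega] using hle i₀ (j₀ + 1)
    linarith

section Invincible

variable (a : ℕ → ℝ)

lemma Nalloc_one (n j : ℕ) (t : ℝ) : Nalloc a 1 n j t = a j + Nstar a 1 (n - j) t := by
  simp [Nalloc]

lemma le_Nval_succ (i j : ℕ) (t : ℝ) : a (i + 1) + Nstar a 1 j t ≤ Nval a 1 (i + j + 1) t := by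
  have := Nalloc_le_Nval a 1 (n := i + j + 1) (j := i + 1) t (by omega) (by omega)
  rwa [Nalloc_one, show i + j + 1 - (i + 1) = j by omega] at this

lemma exists_Nval_succ_eq (r : ℕ) (t : ℝ) :
    ∃ i j, i + j = r ∧ Nval a 1 (r + 1) t = a (i + 1) + Nstar a 1 j t := by
  obtain ⟨k, hk₁, hkr, h⟩ := exists_Nalloc_eq_Nval a 1 r t
  refine ⟨k - 1, r + 1 - k, by omega, ?_⟩
  rwa [Nat.sub_add_cancel hk₁, ← Nalloc_one]

variable {a}

lemma Nval_concave_at_zero (ha1 : 0 ≤ a 1) (ha2 : a 2 - a 1 ≤ a 1) (t : ℝ) :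
    Nval a 1 2 t - Nval a 1 1 t ≤ Nval a 1 1 t - Nval a 1 0 t := by
  obtain ⟨i, j, hij, h⟩ := exists_Nval_succ_eq a 1 t
  rw [h, Nval_one, Nval_zero]
  rcases Nat.add_eq_one_iff.mp hij with ⟨rfl, rfl⟩ | ⟨rfl, rfl⟩
  · rw [Nstar_one]
    nlinarith [exp_pos (-t)]
  · linarith [Nstar_zero a 1 t]

theorem Nval_concave_at (ha1 : 0 ≤ a 1) (ha0 : a 0 = 0) (ha : Antitone fun k => a (k + 1) - a k)
    (m : ℕ) {t : ℝ} (ht : 0 ≤ t) :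
    Nval a 1 (m + 2) t - Nval a 1 (m + 1) t ≤ Nval a 1 (m + 1) t - Nval a 1 m t := by
  induction m using Nat.strong_induction_on generalizing t with
  | _ m ih =>
    rcases m with _ | m
    · exact Nval_concave_at_zero ha1 (by simpa [ha0] using ha zero_le_one) t
    have hNstar : AntitoneOn (fun k => Nstar a 1 (k + 1) t - Nstar a 1 k t) (Set.Iic (m + 1)) :=
      antitoneOn_of_add_one_le Set.ordConnected_Iic fun k _ _ hk =>
        Nstar_concave_at ht fun x hx => ih k (by simpa using hk) hx.1
    exact supConvolution_concave_at (f := fun i => a (i + 1)) (h := fun r => Nval a 1 (r + 1) t)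
      (fun _ _ _ _ hij => ha (Nat.succ_le_succ hij)) hNstar
      (le_Nval_succ a · · t) (exists_Nval_succ_eq a · t)

end Invincible

theorem invincible_N_concave_general
    (a : ℕ → ℝ) (haI : ∀ j, a j ∈ Set.Icc (0:ℝ) 1) (ha0 : a 0 = 0)
    (hconc : ∀ j : ℕ, a (j + 2) - a (j + 1) < a (j + 1) - a j) :
    ∀ t : ℝ, 0 ≤ t →
      (∀ n : ℕ, Nval a 1 (n + 2) t - Nval a 1 (n + 1) t ≤ Nval a 1 (n + 1) t - Nval a 1 n t) ∧
      (∀ n : ℕ, Nstar a 1 (n + 2) t - Nstar a 1 (n + 1) t ≤ Nstar a 1 (n + 1) t - Nstar a 1 n t) := by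
  have ha : Antitone fun k => a (k + 1) - a k := antitone_nat_of_succ_le fun k => (hconc k).le
  have hN := Nval_concave_at (haI 1).1 ha0 ha
  exact fun _ ht => ⟨fun n => hN n ht, fun n => Nstar_concave_at ht fun _ hx => hN n hx.1⟩

/-- For the Invincible Fighter (`u = 1`), for every fixed `t ≥ 0` the sequence
`n ↦ N(n,t)` is concave in `n`, and consequently so is `n ↦ N*(n,t)`. -/
theorem invincible_N_concave
    (a : ℕ → ℝ) (haI : ∀ j, a j ∈ Set.Icc (0:ℝ) 1) (ha0 : a 0 = 0)
    (hmono : StrictMono a)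
    (hconc : ∀ j : ℕ, a (j + 2) - a (j + 1) < a (j + 1) - a j) :
    ∀ t : ℝ, 0 ≤ t →
      (∀ n : ℕ, Nval a 1 (n + 2) t - Nval a 1 (n + 1) t ≤ Nval a 1 (n + 1) t - Nval a 1 n t) ∧
      (∀ n : ℕ, Nstar a 1 (n + 2) t - Nstar a 1 (n + 1) t ≤ Nstar a 1 (n + 1) t - Nstar a 1 n t) :=
  invincible_N_concave_general a haI ha0 hconc
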